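/- Let μ > 0 and let ψ : [0, ∞) → ℓ² be a solution of the AL lattice. Then for every t ≥ 0 the solution satisfies the estimate μ ‖ψ(t)‖_{ℓ²}² = μ Σ_{n∈ℤ} |ψ_n(t)|² ≤ exp(P_μ(ψ(0))) − 1. -/

import Mathlib

open Set

noncomputable section

/-- The Hilbert space ℓ² of square-summable sequences of complex numbers indexed by ℤ. -/
abbrev l2 : Type := lp (fun _ : ℤ => ℂ) 2

/-- `ψ : I → ℓ²` is a solution of the Ablowitz–Ladik lattice
`i ψ̇ₙ + (ψₙ₊₁ + ψₙ₋₁) + μ|ψₙ|²(ψₙ₊₁ + ψₙ₋₁) = 0` on the set `s`, with derivative curve `ψ'`: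
it is continuously differentiable and satisfies the equation componentwise. -/
def IsALSol (μ : ℝ) (s : Set ℝ) (ψ ψ' : ℝ → l2) : Prop :=
  (∀ t ∈ s, HasDerivWithinAt ψ (ψ' t) s t) ∧ ContinuousOn ψ' s ∧
    ∀ t ∈ s, ∀ n : ℤ,
      Complex.I * (ψ' t) n + ((ψ t) (n + 1) + (ψ t) (n - 1))
        + (μ * ‖(ψ t) n‖ ^ 2 : ℝ) * ((ψ t) (n + 1) + (ψ t) (n - 1)) = 0

/-- The deformed power `P_μ(ψ) = Σₙ ln(1 + μ|ψₙ|²)`. -/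
def Pdef (μ : ℝ) (ψ : l2) : ℝ := ∑' n : ℤ, Real.log (1 + μ * ‖ψ n‖ ^ 2)

/-! The deformed power is conserved. Solving the lattice equation for `ψ̇ₙ` gives the local
conservation law `d/dt log (1 + μ|ψₙ|²) = Jₙ - Jₙ₋₁` with current `Jₙ = 2μ Im (ψₙ ψ̄ₙ₊₁)`, so the
sum of the densities over `(-N, N]` changes at the rate `J_N - J_{-N}`. This rate tends to zero
as `N → ∞` (the currents are summable) and is dominated by `4μ‖ψ‖²`, so by dominated convergence
`P_μ(ψ(t)) = P_μ(ψ(0))`. For a single `φ ∈ ℓ²`, `1 + ∑ aₙ ≤ ∏ (1 + aₙ)` with `aₙ = μ|φₙ|² ≥ 0`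
reads `μ‖φ‖² ≤ exp P_μ(φ) - 1`. -/

open Filter Topology MeasureTheory
open scoped ComplexConjugate InnerProductSpace

theorem Finset.one_add_sum_le_prod_one_add {ι R : Type*} [CommSemiring R] [PartialOrder R]
    [IsOrderedRing R] (s : Finset ι) {f : ι → R} (hf : ∀ i ∈ s, 0 ≤ f i) :
    1 + ∑ i ∈ s, f i ≤ ∏ i ∈ s, (1 + f i) := by
  classical
  induction s using Finset.induction_on with
  | empty => simp
  | insert a s ha ih =>
    rw [Finset.sum_insert ha, Finset.prod_insert ha]
    have hfa := hf a (Finset.mem_insert_self a s)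
    have hs : 0 ≤ ∑ i ∈ s, f i := Finset.sum_nonneg fun i hi ↦ hf i (Finset.mem_insert_of_mem hi)
    calc 1 + (f a + ∑ i ∈ s, f i) ≤ 1 + (f a + ∑ i ∈ s, f i) + f a * ∑ i ∈ s, f i :=
          le_add_of_nonneg_right (mul_nonneg hfa hs)
      _ = (1 + f a) * (1 + ∑ i ∈ s, f i) := by ring
      _ ≤ (1 + f a) * ∏ i ∈ s, (1 + f i) :=
          mul_le_mul_of_nonneg_left (ih fun i hi ↦ hf i (Finset.mem_insert_of_mem hi))
            (add_nonneg zero_le_one hfa)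

theorem Real.tsum_le_exp_tsum_log_one_add_sub_one {ι : Type*} {f : ι → ℝ} (hf : ∀ i, 0 ≤ f i)
    (hs : Summable f) : ∑' i, f i ≤ Real.exp (∑' i, Real.log (1 + f i)) - 1 := by
  refine Real.tsum_le_of_sum_le hf fun s ↦ ?_
  calc ∑ i ∈ s, f i ≤ ∏ i ∈ s, (1 + f i) - 1 := by
        linarith [s.one_add_sum_le_prod_one_add fun i _ ↦ hf i]
    _ = Real.exp (∑ i ∈ s, Real.log (1 + f i)) - 1 := by
        rw [Real.exp_sum]
        congr 1
        exact Finset.prod_congr rfl fun i _ ↦ (Real.exp_log (by linarith [hf i])).symm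
    _ ≤ Real.exp (∑' i, Real.log (1 + f i)) - 1 := by
        gcongr
        exact (Real.summable_log_one_add_of_summable hs).sum_le_tsum s
          fun i _ ↦ Real.log_nonneg (by linarith [hf i])

theorem lp.hasSum_norm_sq {α : Type*} {E : α → Type*} [∀ i, NormedAddCommGroup (E i)]
    (φ : lp E 2) : HasSum (fun i ↦ ‖φ i‖ ^ 2) (‖φ‖ ^ 2) := by
  simpa using lp.hasSum_norm (p := 2) (by norm_num) φ

theorem Int.sum_Ioc_sub_sub_one {M : Type*} [AddCommGroup M] (g : ℤ → M) {a b : ℤ} (hab : a ≤ b) :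
    ∑ n ∈ Finset.Ioc a b, (g n - g (n - 1)) = g b - g a := by
  induction b, hab using Int.leInduction with
  | base => simp
  | succ b hab ih =>
    rw [← Finset.insert_Ioc_right_eq_Ioc_add_one hab, Finset.sum_insert (by simp), ih,
      add_sub_cancel_right]
    abel

theorem HasDerivWithinAt.log_one_add_mul_norm_sq {F : Type*} [NormedAddCommGroup F]
    [InnerProductSpace ℝ F] {u : ℝ → F} {u' : F} {s : Set ℝ} {t μ : ℝ} (hμ : 0 ≤ μ)
    (hu : HasDerivWithinAt u u' s t) :
    HasDerivWithinAt (fun r ↦ Real.log (1 + μ * ‖u r‖ ^ 2))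
      (μ * (2 * ⟪u t, u'⟫_ℝ) / (1 + μ * ‖u t‖ ^ 2)) s t :=
  ((hu.norm_sq.const_mul μ).const_add 1).log (by positivity)

theorem tendsto_sub_nhds_zero_of_hasDerivWithinAt_of_dominated {ι E : Type*}
    [NormedAddCommGroup E] [NormedSpace ℝ E] [CompleteSpace E] {l : Filter ι}
    [l.IsCountablyGenerated] {F g : ι → ℝ → E} {bound : ℝ → ℝ} {a b : ℝ} (hab : a ≤ b)
    (hF : ∀ i, ∀ x ∈ Icc a b, HasDerivWithinAt (F i) (g i x) (Icc a b) x)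
    (hg : ∀ i, ContinuousOn (g i) (Icc a b))
    (hg_le : ∀ i, ∀ x ∈ Icc a b, ‖g i x‖ ≤ bound x)
    (h_bound : IntervalIntegrable bound volume a b)
    (hg_lim : ∀ x ∈ Icc a b, Tendsto (fun i ↦ g i x) l (𝓝 0)) :
    Tendsto (fun i ↦ F i b - F i a) l (𝓝 0) := by
  have hIoc : uIoc a b ⊆ Icc a b := by
    rw [uIoc_of_le hab]; exact Ioc_subset_Icc_self
  have hFTC : ∀ i, ∫ x in a..b, g i x = F i b - F i a := fun i ↦
    intervalIntegral.integral_eq_sub_of_hasDerivAt_of_le hab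
      (fun x hx ↦ (hF i x hx).continuousWithinAt)
      (fun x hx ↦ (hF i x (Ioo_subset_Icc_self hx)).hasDerivAt (Icc_mem_nhds hx.1 hx.2))
      ((hg i).intervalIntegrable_of_Icc hab)
  have hDCT : Tendsto (fun i ↦ ∫ x in a..b, g i x) l (𝓝 (∫ _ in a..b, (0 : E))) :=
    intervalIntegral.tendsto_integral_filter_of_dominated_convergence bound
      (.of_forall fun i ↦ ((hg i).mono hIoc).aestronglyMeasurable measurableSet_uIoc)
      (.of_forall fun i ↦ .of_forall fun x hx ↦ hg_le i x (hIoc hx)) h_bound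
      (.of_forall fun x hx ↦ hg_lim x (hIoc hx))
  simpa only [hFTC, intervalIntegral.integral_zero] using hDCT

namespace AblowitzLadik

theorem mul_norm_sq_le_exp_Pdef_sub_one {μ : ℝ} (hμ : 0 ≤ μ) (φ : l2) :
    μ * ‖φ‖ ^ 2 ≤ Real.exp (Pdef μ φ) - 1 := by
  have h := Real.tsum_le_exp_tsum_log_one_add_sub_one (fun n ↦ by positivity)
    ((lp.hasSum_norm_sq φ).summable.mul_left μ)
  rwa [tsum_mul_left, (lp.hasSum_norm_sq φ).tsum_eq] at h

def current (μ : ℝ) (φ : l2) (n : ℤ) : ℝ :=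
  2 * μ * (φ n * conj (φ (n + 1))).im

theorem continuous_current (μ : ℝ) (n : ℤ) : Continuous fun φ : l2 ↦ current μ φ n := by
  have h : ∀ m, Continuous fun φ : l2 ↦ φ m := fun m ↦ (lp.evalCLM ℂ (fun _ : ℤ ↦ ℂ) 2 m).continuous
  exact continuous_const.mul
    (Complex.continuous_im.comp ((h n).mul (Complex.continuous_conj.comp (h (n + 1)))))

theorem abs_current_le {μ : ℝ} (hμ : 0 ≤ μ) (φ : l2) (n : ℤ) :
    |current μ φ n| ≤ μ * (‖φ n‖ ^ 2 + ‖φ (n + 1)‖ ^ 2) := by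
  have him : |(φ n * conj (φ (n + 1))).im| ≤ ‖φ n‖ * ‖φ (n + 1)‖ := by
    simpa using Complex.abs_im_le_norm (φ n * conj (φ (n + 1)))
  rw [current, abs_mul, abs_of_nonneg (by positivity)]
  nlinarith [sq_nonneg (‖φ n‖ - ‖φ (n + 1)‖)]

theorem abs_current_le_norm_sq {μ : ℝ} (hμ : 0 ≤ μ) (φ : l2) (n : ℤ) :
    |current μ φ n| ≤ 2 * μ * ‖φ‖ ^ 2 := by
  have h₁ := lp.norm_apply_le_norm two_ne_zero φ n
  have h₂ := lp.norm_apply_le_norm two_ne_zero φ (n + 1)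
  calc |current μ φ n| ≤ μ * (‖φ n‖ ^ 2 + ‖φ (n + 1)‖ ^ 2) := abs_current_le hμ φ n
    _ ≤ μ * (‖φ‖ ^ 2 + ‖φ‖ ^ 2) := by gcongr
    _ = 2 * μ * ‖φ‖ ^ 2 := by ring

theorem tendsto_current_cofinite {μ : ℝ} (hμ : 0 ≤ μ) (φ : l2) :
    Tendsto (current μ φ) cofinite (𝓝 0) := by
  have hsq := (lp.hasSum_norm_sq φ).summable
  have hshift := hsq.comp_injective (add_left_injective (1 : ℤ))
  refine (Summable.of_norm_bounded ((hsq.add hshift).mul_left μ) fun n ↦ ?_).tendsto_cofinite_zero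
  exact (Real.norm_eq_abs _).trans_le (abs_current_le hμ φ n)

theorem tendsto_current_sub_current_neg {μ : ℝ} (hμ : 0 ≤ μ) (φ : l2) :
    Tendsto (fun N : ℕ ↦ current μ φ N - current μ φ (-N)) atTop (𝓝 0) := by
  have h := tendsto_current_cofinite hμ φ
  rw [Int.cofinite_eq, tendsto_sup] at h
  simpa using (h.2.comp tendsto_natCast_atTop_atTop).sub
    (h.1.comp (tendsto_neg_atTop_atBot.comp tendsto_natCast_atTop_atTop))

theorem log_density_rate_eq_current_sub {μ : ℝ} (hμ : 0 ≤ μ) {φ d : l2} {n : ℤ}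
    (h : Complex.I * d n + (φ (n + 1) + φ (n - 1))
      + (μ * ‖φ n‖ ^ 2 : ℝ) * (φ (n + 1) + φ (n - 1)) = 0) :
    μ * (2 * ⟪φ n, d n⟫_ℝ) / (1 + μ * ‖φ n‖ ^ 2) = current μ φ n - current μ φ (n - 1) := by
  have hc : 1 + μ * ‖φ n‖ ^ 2 ≠ 0 := by positivity
  have hd : d n = Complex.I * ((1 + μ * ‖φ n‖ ^ 2 : ℝ) : ℂ) * (φ (n + 1) + φ (n - 1)) := by
    push_cast at h ⊢
    linear_combination (-Complex.I) * h + d n * Complex.I_sq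
  rw [current, current, sub_add_cancel, Complex.inner, hd]
  field_simp
  simp only [Complex.mul_re, Complex.mul_im, Complex.add_re, Complex.add_im, Complex.I_re,
    Complex.I_im, Complex.ofReal_re, Complex.ofReal_im, Complex.conj_re, Complex.conj_im]
  ring

variable {μ : ℝ} {s : Set ℝ} {ψ ψ' : ℝ → l2}

theorem hasDerivWithinAt_log_density (hμ : 0 ≤ μ) (hψ : IsALSol μ s ψ ψ') {t : ℝ} (ht : t ∈ s)
    (n : ℤ) :
    HasDerivWithinAt (fun r ↦ Real.log (1 + μ * ‖ψ r n‖ ^ 2))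
      (current μ (ψ t) n - current μ (ψ t) (n - 1)) s t := by
  have hu := (lp.evalCLM ℝ (fun _ : ℤ ↦ ℂ) 2 n).hasFDerivAt.comp_hasDerivWithinAt t (hψ.1 t ht)
  rw [← log_density_rate_eq_current_sub hμ (hψ.2.2 t ht n)]
  exact hu.log_one_add_mul_norm_sq hμ

theorem hasDerivWithinAt_sum_Ioc_log_density (hμ : 0 ≤ μ) (hψ : IsALSol μ s ψ ψ') {t : ℝ}
    (ht : t ∈ s) (N : ℕ) :
    HasDerivWithinAt (fun r ↦ ∑ n ∈ Finset.Ioc (-N : ℤ) N, Real.log (1 + μ * ‖ψ r n‖ ^ 2))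
      (current μ (ψ t) N - current μ (ψ t) (-N)) s t := by
  have h := HasDerivWithinAt.fun_sum fun n (_ : n ∈ Finset.Ioc (-N : ℤ) N) ↦
    hasDerivWithinAt_log_density hμ hψ ht n
  rwa [Int.sum_Ioc_sub_sub_one (current μ (ψ t)) (by omega)] at h

theorem Pdef_eq_of_isALSol (hμ : 0 ≤ μ) (hψ : IsALSol μ s ψ ψ') {a b : ℝ} (hab : a ≤ b)
    (hs : Icc a b ⊆ s) : Pdef μ (ψ b) = Pdef μ (ψ a) := by
  have hψc : ContinuousOn ψ (Icc a b) := fun x hx ↦ (hψ.1 x (hs hx)).continuousWithinAt.mono hs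
  have hP : ∀ r, Tendsto (fun N : ℕ ↦ ∑ n ∈ Finset.Ioc (-N : ℤ) N,
      Real.log (1 + μ * ‖ψ r n‖ ^ 2)) atTop (𝓝 (Pdef μ (ψ r))) := fun r ↦
    (Real.summable_log_one_add_of_summable
      ((lp.hasSum_norm_sq (ψ r)).summable.mul_left μ)).hasSum.comp Finset.tendsto_Ioc_neg
  have hdom : ∀ N : ℕ, ∀ x ∈ Icc a b,
      ‖current μ (ψ x) N - current μ (ψ x) (-N)‖ ≤ 4 * μ * ‖ψ x‖ ^ 2 := fun N x _ ↦
    calc ‖current μ (ψ x) N - current μ (ψ x) (-N)‖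
        ≤ |current μ (ψ x) N| + |current μ (ψ x) (-N)| := abs_sub _ _
      _ ≤ 2 * μ * ‖ψ x‖ ^ 2 + 2 * μ * ‖ψ x‖ ^ 2 :=
        add_le_add (abs_current_le_norm_sq hμ _ _) (abs_current_le_norm_sq hμ _ _)
      _ = 4 * μ * ‖ψ x‖ ^ 2 := by ring
  have hflux := tendsto_sub_nhds_zero_of_hasDerivWithinAt_of_dominated hab
    (fun N x hx ↦ (hasDerivWithinAt_sum_Ioc_log_density hμ hψ (hs hx) N).mono hs)
    (fun N ↦ ((continuous_current μ N).comp_continuousOn hψc).sub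
      ((continuous_current μ (-N)).comp_continuousOn hψc))
    hdom ((continuousOn_const.mul (hψc.norm.pow 2)).intervalIntegrable_of_Icc hab)
    (fun x _ ↦ tendsto_current_sub_current_neg hμ (ψ x))
  exact sub_eq_zero.1 (tendsto_nhds_unique ((hP b).sub (hP a)) hflux)

end AblowitzLadik

/-- For a solution `ψ` of the AL lattice on `[0,∞)`, the `ℓ²` norm satisfies
`μ‖ψ(t)‖² ≤ exp(P_μ(ψ(0))) − 1` for all `t ≥ 0`. -/
theorem AL_l2_bound (μ : ℝ) (hμ : 0 < μ) (ψ ψ' : ℝ → l2)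
    (hψ : IsALSol μ (Ici 0) ψ ψ') :
    ∀ t : ℝ, 0 ≤ t → μ * ‖ψ t‖ ^ 2 ≤ Real.exp (Pdef μ (ψ 0)) - 1 := by
  intro t ht
  rw [← AblowitzLadik.Pdef_eq_of_isALSol hμ.le hψ ht Icc_subset_Ici_self]
  exact AblowitzLadik.mul_norm_sq_le_exp_Pdef_sub_one hμ.le (ψ t)
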